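/- Let μ be a free measure on ℕ and ε ∈ (0,1] such that: (i) for every δ < ε, every partition of ℕ into finite sets has a selector of μ-measure at least δ; and (ii) ⟨A_n⟩ is a partition of ℕ into finite sets such that every selector of ⟨A_n⟩ has μ-measure at most ε. Let S be a selector of ⟨A_n⟩ with μ(S) > 0, and define μ↾S by μ↾S(B) = μ(S ∩ B)/μ(S). Then μ↾S is an almost Q-measure; moreover, if μ is additionally a P-measure, then μ↾S is a Q-measure. -/

import Mathlib

open Filter

/-- A finitely additive probability measure defined on all subsets of `ℕ`. -/
def IsMeasure (μ : Set ℕ → ℝ) : Prop :=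
  (∀ A : Set ℕ, 0 ≤ μ A ∧ μ A ≤ 1) ∧ μ Set.univ = 1 ∧
    ∀ A B : Set ℕ, Disjoint A B → μ (A ∪ B) = μ A + μ B

/-- A measure is free if it vanishes on finite sets. -/
def IsFree (μ : Set ℕ → ℝ) : Prop := ∀ A : Set ℕ, A.Finite → μ A = 0

/-- A function is finite-to-one if all fibers are finite. -/
def FinToOne (f : ℕ → ℕ) : Prop := ∀ n : ℕ, (f ⁻¹' {n}).Finite

/-- Rudin-Blass reducibility: `ν ≤_RB μ` via a finite-to-one map. -/
def RBLe (ν μ : Set ℕ → ℝ) : Prop :=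
  ∃ f : ℕ → ℕ, FinToOne f ∧ ∀ A : Set ℕ, μ (f ⁻¹' A) = ν A

/-- Rudin-Keisler reducibility: `ν ≤_RK μ`. -/
def RKLe (ν μ : Set ℕ → ℝ) : Prop :=
  ∃ f : ℕ → ℕ, ∀ A : Set ℕ, μ (f ⁻¹' A) = ν A

/-- A measure is shift invariant if `μ(A + 1) = μ(A)`. -/
def ShiftInvariant (μ : Set ℕ → ℝ) : Prop :=
  ∀ A : Set ℕ, μ ((fun n => n + 1) '' A) = μ A

/-- A measure extends the asymptotic density. -/
def ExtendsDensity (μ : Set ℕ → ℝ) : Prop :=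
  ∀ (A : Set ℕ) (d : ℝ),
    Tendsto (fun n : ℕ => ((A ∩ Set.Iio n).ncard : ℝ) / n) atTop (nhds d) → μ A = d

/-- A partition of `ℕ` indexed by `ℕ`. -/
def IsPartition (A : ℕ → Set ℕ) : Prop :=
  Pairwise (Function.onFun Disjoint A) ∧ (⋃ n, A n) = Set.univ

/-- A selector of a partition: meets each piece in at most one point. -/
def IsSelector (S : Set ℕ) (A : ℕ → Set ℕ) : Prop :=
  ∀ n : ℕ, (S ∩ A n).Subsingleton

/-- A Q-measure: each partition into finite sets has a selector of full measure. -/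
def IsQMeasure (μ : Set ℕ → ℝ) : Prop :=
  ∀ A : ℕ → Set ℕ, IsPartition A → (∀ n, (A n).Finite) →
    ∃ S : Set ℕ, IsSelector S A ∧ μ S = 1

/-- A Q⁺-measure: each partition into finite sets has a selector of positive measure. -/
def IsQPlusMeasure (μ : Set ℕ → ℝ) : Prop :=
  ∀ A : ℕ → Set ℕ, IsPartition A → (∀ n, (A n).Finite) →
    ∃ S : Set ℕ, IsSelector S A ∧ 0 < μ S

/-- A P-measure: each partition has a pseudo-selector of the largest possible measure. -/
def IsPMeasure (μ : Set ℕ → ℝ) : Prop :=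
  ∀ A : ℕ → Set ℕ, IsPartition A →
    ∃ S : Set ℕ, (∀ n, (S ∩ A n).Finite) ∧ μ S = 1 - ∑' n, μ (A n)

/-- A selective measure: each partition has a selector of the largest possible measure. -/
def IsSelectiveMeasure (μ : Set ℕ → ℝ) : Prop :=
  ∀ A : ℕ → Set ℕ, IsPartition A →
    ∃ S : Set ℕ, IsSelector S A ∧ μ S = 1 - ∑' n, μ (A n)

/-- A non-atomic measure: finite partitions into pieces of arbitrarily small measure. -/
def NonAtomic (μ : Set ℕ → ℝ) : Prop :=
  ∀ ε : ℝ, 0 < ε → ∃ (N : ℕ) (P : Fin N → Set ℕ),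
    Pairwise (Function.onFun Disjoint P) ∧ (⋃ i, P i) = Set.univ ∧ ∀ i, μ (P i) < ε

/-- The continuum hypothesis: `2 ^ ℵ₀ = ℵ₁`. -/
def CH : Prop := (2 : Cardinal.{0}) ^ Cardinal.aleph0.{0} = Cardinal.aleph.{0} 1


/-- An almost Q-measure: every partition into finite sets admits selectors of measure
arbitrarily close to 1. -/
def IsAlmostQMeasure (μ : Set ℕ → ℝ) : Prop :=
  ∀ A : ℕ → Set ℕ, IsPartition A → (∀ n, (A n).Finite) →
    ∀ δ : ℝ, δ < 1 → ∃ S : Set ℕ, IsSelector S A ∧ δ < μ S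


/-!
Partitions of `ℕ` are the fibre partitions of maps `ℕ → ℕ`, and selectors are the sets on
which the map is injective. Let `p` be the map of `⟨A n⟩` and `f` that of a partition into
finite sets. Merging the pieces of `⟨A n⟩` whose points of `S` lie in the same `f`-fibre gives
a partition into finite sets; a selector `T` of it of measure close to `ε`, together with the
points of `S` in the pieces that `T` misses, is a selector of `⟨A n⟩`. So those points have
measure close to `0`, and the points of `S` in the pieces that `T` meets form an `f`-injective
set of measure close to `μ S`.

For a P-measure, take such sets `E i` with error `2⁻ⁱ`. Pseudo-intersections of their tails
give an increasing sequence of subsets of `S`, each `f`-injective up to finitely many points,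
whose measures tend to `μ S`; keeping only the points with no `f`-twin at their own stage
yields an `f`-injective subset of `S` of full measure.
-/

open Set

section

variable {μ : Set ℕ → ℝ}

theorem isPartition_fibers (f : ℕ → ℕ) : IsPartition fun n => f ⁻¹' {n} :=
  ⟨fun _ _ hmn => disjoint_left.mpr fun _ hm hn => hmn (hm.symm.trans hn),
    eq_univ_of_forall fun x => mem_iUnion.mpr ⟨f x, rfl⟩⟩

theorem IsPartition.exists_eq_fibers {A : ℕ → Set ℕ} (hA : IsPartition A) :
    ∃ f : ℕ → ℕ, A = fun n => f ⁻¹' {n} := by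
  choose f hf using fun x => mem_iUnion.mp (hA.2 ▸ mem_univ x : x ∈ ⋃ n, A n)
  refine ⟨f, funext fun n => ext fun x => ⟨fun hx => ?_, fun hx => hx ▸ hf x⟩⟩
  by_contra hne
  exact disjoint_left.mp (hA.1 hne) (hf x) hx

theorem isSelector_fibers_iff {S : Set ℕ} {f : ℕ → ℕ} :
    IsSelector S (fun n => f ⁻¹' {n}) ↔ S.InjOn f :=
  ⟨fun h _ hx _ hy hxy => h _ ⟨hx, hxy⟩ ⟨hy, rfl⟩,
    fun h _ _ hx _ hy => h hx.1 hy.1 (hx.2.trans hy.2.symm)⟩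

namespace IsMeasure

theorem nonneg (hμ : IsMeasure μ) (X : Set ℕ) : 0 ≤ μ X := (hμ.1 X).1

theorem union (hμ : IsMeasure μ) {X Y : Set ℕ} (h : Disjoint X Y) :
    μ (X ∪ Y) = μ X + μ Y :=
  hμ.2.2 X Y h

theorem empty (hμ : IsMeasure μ) : μ ∅ = 0 := by
  have := hμ.union (disjoint_empty ∅)
  rw [union_self] at this
  linarith

theorem inter_add_diff (hμ : IsMeasure μ) (X Y : Set ℕ) : μ (X ∩ Y) + μ (X \ Y) = μ X := by
  rw [← hμ.union (disjoint_sdiff_right.mono_left inter_subset_right), inter_union_sdiff]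

theorem mono (hμ : IsMeasure μ) {X Y : Set ℕ} (h : X ⊆ Y) : μ X ≤ μ Y := by
  have := hμ.inter_add_diff Y X
  rw [inter_eq_right.mpr h] at this
  linarith [hμ.nonneg (Y \ X)]

theorem union_le (hμ : IsMeasure μ) (X Y : Set ℕ) : μ (X ∪ Y) ≤ μ X + μ Y := by
  rw [← union_sdiff_self, hμ.union disjoint_sdiff_right]
  linarith [hμ.mono (sdiff_subset : Y \ X ⊆ Y)]

theorem compl (hμ : IsMeasure μ) (X : Set ℕ) : μ Xᶜ = 1 - μ X := by
  rw [← hμ.2.1, ← union_compl_self X, hμ.union disjoint_compl_right]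
  ring

theorem biUnion_le (hμ : IsMeasure μ) (s : Finset ℕ) (D : ℕ → Set ℕ) :
    μ (⋃ i ∈ s, D i) ≤ ∑ i ∈ s, μ (D i) := by
  classical
  induction s using Finset.induction_on with
  | empty => simp [hμ.empty]
  | insert i s hi ih =>
    rw [Finset.set_biUnion_insert, Finset.sum_insert hi]
    exact (hμ.union_le _ _).trans (by linarith)

theorem preimage_Iio (hμ : IsMeasure μ) (r : ℕ → ℕ) (N : ℕ) :
    μ (r ⁻¹' Iio N) = ∑ n ∈ Finset.range N, μ (r ⁻¹' {n}) := by
  induction N with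
  | zero => simp [hμ.empty]
  | succ N ih =>
    rw [Finset.sum_range_succ, ← ih, ← hμ.union]
    · congr 1
      ext x
      simp only [mem_union, mem_preimage, mem_Iio, mem_singleton_iff]
      omega
    · exact disjoint_left.mpr fun x hx hx' => (ne_of_lt hx) hx'

theorem le_of_diff_finite (hμ : IsMeasure μ) (hfree : IsFree μ) {X Y : Set ℕ}
    (h : (X \ Y).Finite) : μ X ≤ μ Y := by
  rw [← hμ.inter_add_diff X Y, hfree _ h, add_zero]
  exact hμ.mono inter_subset_right

end IsMeasure

/-- The selector `T` is taken for the partition obtained from the fibres of `p` by merging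
those whose points of `S` lie in the same fibre of `f`. -/
theorem exists_injOn_subset_measure_ge (hμ : IsMeasure μ) {ε : ℝ} {p : ℕ → ℕ}
    (hp : FinToOne p) (hsel : ∀ δ < ε, ∀ c : ℕ → ℕ, FinToOne c → ∃ T, T.InjOn c ∧ δ ≤ μ T)
    (hcrit : ∀ T, T.InjOn p → μ T ≤ ε) {S : Set ℕ} (hS : S.InjOn p) {f : ℕ → ℕ}
    (hf : FinToOne f) {η : ℝ} (hη : 0 < η) : ∃ E ⊆ S, E.InjOn f ∧ μ S - η ≤ μ E := by
  classical
  let g : ℕ → ℕ := fun n =>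
    if n ∈ p '' S then 2 * f (Function.invFunOn p S n) else 2 * n + 1
  have hg : ∀ x ∈ S, g (p x) = 2 * f x := fun x hx => by
    simp only [g, if_pos (mem_image_of_mem p hx), hS.leftInvOn_invFunOn hx]
  have hgp : FinToOne (g ∘ p) := fun k => by
    have hfib : g ⁻¹' {k} ⊆ p '' (S ∩ f ⁻¹' {k / 2}) ∪ {k / 2} := fun n hn => by
      by_cases h : n ∈ p '' S
      · obtain ⟨x, hx, rfl⟩ := h
        have : g (p x) = k := hn
        rw [hg x hx] at this
        refine Or.inl ⟨x, ⟨hx, ?_⟩, rfl⟩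
        simp only [mem_preimage, mem_singleton_iff]
        omega
      · have : g n = k := hn
        simp only [g, if_neg h] at this
        exact Or.inr (by simp only [mem_singleton_iff]; omega)
    rw [preimage_comp]
    exact ((((hf _).inter_of_right S).image p).union (finite_singleton _)).subset hfib
      |>.preimage' fun b _ => hp b
  obtain ⟨T, hTinj, hTμ⟩ := hsel (ε - η) (by linarith) _ hgp
  set Q := p ⁻¹' (p '' T)
  have hTQ : T ⊆ Q := subset_preimage_image p T
  have hdisj : Disjoint T (S \ Q) := disjoint_sdiff_right.mono_left hTQ
  have hW : (T ∪ (S \ Q)).InjOn p :=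
    (injOn_union hdisj).mpr ⟨hTinj.of_comp, hS.mono sdiff_subset,
      fun x hx y hy hxy => hy.2 ⟨x, hx, hxy⟩⟩
  have hSQ : μ (S \ Q) ≤ η := by
    have := hcrit _ hW
    rw [hμ.union hdisj] at this
    linarith
  refine ⟨S ∩ Q, inter_subset_left, ?_, by linarith [hμ.inter_add_diff S Q]⟩
  rintro x ⟨hxS, t, htT, htx⟩ y ⟨hyS, t', ht'T, hty⟩ hxy
  have htt' : t = t' := hTinj htT ht'T <| by
    simp only [Function.comp_apply, htx, hty, hg x hxS, hg y hyS, hxy]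
  exact hS hxS hyS (by rw [← htx, ← hty, htt'])

/-- The pseudo-intersection property of a P-measure, applied to the partition by the first
`K` with `x ∉ Θ K` (piece `0` being `⋂ K, Θ K`). -/
theorem IsPMeasure.exists_almost_subset (hP : IsPMeasure μ) (hμ : IsMeasure μ)
    (hfree : IsFree μ) {Θ : ℕ → Set ℕ} (hΘ : Antitone Θ) {c : ℝ} (hc : ∀ K, c ≤ μ (Θ K)) :
    ∃ V ⊆ Θ 0, (∀ K, (V \ Θ K).Finite) ∧ c ≤ μ V := by
  classical
  let r : ℕ → ℕ := fun x => if h : ∃ K, x ∉ Θ K then Nat.find h + 1 else 0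
  have hr0 : ∀ x, r x = 0 → ∀ K, x ∈ Θ K := fun x hx K => by
    by_contra hK
    simp [r, dif_pos (⟨K, hK⟩ : ∃ K, x ∉ Θ K)] at hx
  have hr_lt : ∀ x K, x ∉ Θ K → r x < K + 2 := fun x K hK => by
    simp only [r, dif_pos (⟨K, hK⟩ : ∃ K, x ∉ Θ K)]
    have := Nat.find_min' (⟨K, hK⟩ : ∃ K, x ∉ Θ K) hK
    omega
  have hr_notMem : ∀ x N, r x < N → r x ≠ 0 → x ∉ Θ N := fun x N hN h0 => by
    by_cases h : ∃ K, x ∉ Θ K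
    · simp only [r, dif_pos h] at hN
      exact fun hx => Nat.find_spec h (hΘ (by omega) hx)
    · simp [r, dif_neg h] at h0
  set C := r ⁻¹' {0}
  obtain ⟨Z, hZfin, hZμ⟩ := hP _ (isPartition_fibers r)
  have hZC : ∀ K, ((Z ∪ C) \ Θ K).Finite := fun K => by
    refine (((finite_Iio (K + 2)).biUnion fun n _ => hZfin n).subset fun x hx => ?_)
    obtain ⟨hxZ | hxC, hxK⟩ := hx
    · exact mem_biUnion (hr_lt x K hxK) ⟨hxZ, rfl⟩
    · exact absurd (hr0 x hxC K) hxK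
  have hsum : ∑' n, μ (r ⁻¹' {n}) ≤ μ C + (1 - c) := by
    refine Real.tsum_le_of_sum_range_le (fun n => hμ.nonneg _) fun N => ?_
    rw [← hμ.preimage_Iio]
    calc μ (r ⁻¹' Iio N) ≤ μ (C ∪ (Θ N)ᶜ) := hμ.mono fun x hx => by
          by_cases h0 : r x = 0
          · exact Or.inl h0
          · exact Or.inr (hr_notMem x N hx h0)
      _ ≤ μ C + (1 - c) := by linarith [hμ.union_le C (Θ N)ᶜ, hμ.compl (Θ N), hc N]
  have hZCμ : μ Z + μ C ≤ μ (Z ∪ C) := by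
    rw [← union_sdiff_self, hμ.union disjoint_sdiff_right]
    have : μ C ≤ μ (C \ Z) := hμ.le_of_diff_finite hfree <| by
      rw [sdiff_sdiff_right_self]
      exact (hZfin 0).subset fun x hx => ⟨hx.2, hx.1⟩
    linarith
  refine ⟨(Z ∪ C) ∩ Θ 0, inter_subset_right, fun K => (hZC K).subset ?_, ?_⟩
  · exact sdiff_subset_sdiff_left inter_subset_left
  · have : μ (Z ∪ C) ≤ μ ((Z ∪ C) ∩ Θ 0) :=
      hμ.le_of_diff_finite hfree (by rw [sdiff_self_inter]; exact hZC 0)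
    linarith

/-- A point of `Y N` that has an `f`-twin in `Y N` is, or is a twin of, one of the finitely
many points of `Y N` outside an `f`-injective set. -/
theorem FinToOne.exists_injOn_almost_supset {f : ℕ → ℕ} (hf : FinToOne f) {Y : ℕ → Set ℕ}
    (hY : Monotone Y) (hinj : ∀ N, ∃ E, E.InjOn f ∧ (Y N \ E).Finite) :
    ∃ E ⊆ ⋃ N, Y N, E.InjOn f ∧ ∀ N, (Y N \ E).Finite := by
  refine ⟨{x | ∃ N, x ∈ Y N ∧ ∀ y ∈ Y N, f y = f x → y = x}, fun x ⟨N, hx, _⟩ =>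
    mem_iUnion.mpr ⟨N, hx⟩, ?_, fun N => ?_⟩
  · rintro x ⟨N, hxN, hx⟩ y ⟨M, hyM, hy⟩ hxy
    rcases le_total M N with h | h
    · exact (hx y (hY h hyM) hxy.symm).symm
    · exact hy x (hY h hxN) hxy
  · obtain ⟨E, hE, hfin⟩ := hinj N
    refine ((hfin.image f).preimage' fun b _ => hf b).subset fun x ⟨hxN, hx⟩ => ?_
    obtain ⟨y, hyN, hxy, hyx⟩ : ∃ y ∈ Y N, f y = f x ∧ y ≠ x := by
      by_contra! h
      exact hx ⟨N, hxN, h⟩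
    by_cases hxE : x ∈ E
    · have hyE : y ∉ E := fun hyE => hyx (hE hyE hxE hxy)
      exact ⟨y, ⟨hyN, hyE⟩, hxy⟩
    · exact ⟨x, ⟨hxN, hxE⟩, rfl⟩

theorem IsPMeasure.exists_almost_subset_tail (hP : IsPMeasure μ) (hμ : IsMeasure μ)
    (hfree : IsFree μ) {S : Set ℕ} {E : ℕ → Set ℕ} (hbad : ∀ i, μ (S \ E i) ≤ (1 / 2) ^ i)
    (J : ℕ) : ∃ V ⊆ S, (∀ i, J ≤ i → (V \ E i).Finite) ∧ μ S - 2 * (1 / 2) ^ J ≤ μ V := by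
  set D : ℕ → Set ℕ := fun K => ⋃ i ∈ Finset.range K, S \ E (J + i)
  have hD : ∀ K, μ (D K) ≤ 2 * (1 / 2) ^ J := fun K =>
    calc μ (D K) ≤ ∑ i ∈ Finset.range K, μ (S \ E (J + i)) := hμ.biUnion_le _ _
      _ ≤ ∑ i ∈ Finset.range K, (1 / 2) ^ J * (1 / 2) ^ i :=
          Finset.sum_le_sum fun i _ => (hbad (J + i)).trans_eq (pow_add _ _ _)
      _ ≤ (1 / 2) ^ J * 2 := by
          rw [← Finset.mul_sum]
          exact mul_le_mul_of_nonneg_left (sum_geometric_two_le K) (by positivity)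
      _ = 2 * (1 / 2) ^ J := mul_comm _ _
  have hanti : Antitone fun K => S \ D K := fun K K' h =>
    sdiff_subset_sdiff_right (biUnion_subset_biUnion_left (by simpa using h))
  have hcompl : ∀ K, μ S - 2 * (1 / 2) ^ J ≤ μ (S \ D K) := fun K => by
    linarith [hμ.mono (subset_sdiff_union S (D K)), hμ.union_le (S \ D K) (D K), hD K]
  obtain ⟨V, hVS, hVfin, hVμ⟩ := hP.exists_almost_subset hμ hfree hanti hcompl
  refine ⟨V, fun x hx => (hVS hx).1, fun i hi => (hVfin (i - J + 1)).subset ?_, hVμ⟩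
  refine sdiff_subset_sdiff_right fun x hx => by_contra fun hxE => hx.2 ?_
  exact mem_biUnion (Finset.self_mem_range_succ _) ⟨hx.1, by rwa [Nat.add_sub_cancel' hi]⟩

theorem IsPMeasure.exists_injOn_subset_measure_eq (hP : IsPMeasure μ) (hμ : IsMeasure μ)
    (hfree : IsFree μ) {f : ℕ → ℕ} (hf : FinToOne f) {S : Set ℕ}
    (happrox : ∀ η > 0, ∃ E ⊆ S, E.InjOn f ∧ μ S - η ≤ μ E) :
    ∃ E ⊆ S, E.InjOn f ∧ μ E = μ S := by
  choose E hES hEinj hEμ using fun i : ℕ => happrox ((1 / 2) ^ i) (by positivity)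
  have hbad : ∀ i, μ (S \ E i) ≤ (1 / 2) ^ i := fun i => by
    have := hμ.inter_add_diff S (E i)
    rw [inter_eq_right.mpr (hES i)] at this
    linarith [hEμ i]
  choose V hVS hVfin hVμ using hP.exists_almost_subset_tail hμ hfree hbad
  obtain ⟨E', hE'V, hE'inj, hE'fin⟩ := hf.exists_injOn_almost_supset monotone_accumulate
    fun N => ⟨E N, hEinj N, ((finite_le_nat N).biUnion fun J hJ => hVfin J N hJ).subset
      fun x hx => by
        obtain ⟨J, hJ, hxJ⟩ := mem_accumulate.mp hx.1
        exact mem_biUnion hJ ⟨hxJ, hx.2⟩⟩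
  have hE'S : E' ⊆ S := hE'V.trans <| by
    rw [iUnion_accumulate]
    exact iUnion_subset hVS
  refine ⟨E', hE'S, hE'inj, le_antisymm (hμ.mono hE'S) ?_⟩
  have hlim : Tendsto (fun N : ℕ => μ S - 2 * (1 / 2) ^ N) atTop (nhds (μ S)) := by
    simpa using ((tendsto_pow_atTop_nhds_zero_of_lt_one (by norm_num : (0 : ℝ) ≤ 1 / 2)
      (by norm_num)).const_mul 2).const_sub (μ S)
  refine le_of_tendsto' hlim fun N => (hVμ N).trans ?_
  exact (hμ.mono subset_accumulate).trans (hμ.le_of_diff_finite hfree (hE'fin N))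

end

theorem stmt_18_general (μ : Set ℕ → ℝ) (hμ : IsMeasure μ) (hfree : IsFree μ) (ε : ℝ)
    (h1 : ∀ δ : ℝ, δ < ε → ∀ A : ℕ → Set ℕ, IsPartition A → (∀ n, (A n).Finite) →
      ∃ T : Set ℕ, IsSelector T A ∧ δ ≤ μ T)
    (A : ℕ → Set ℕ) (hA : IsPartition A) (hAfin : ∀ n, (A n).Finite)
    (h2 : ∀ T : Set ℕ, IsSelector T A → μ T ≤ ε)
    (S : Set ℕ) (hS : IsSelector S A) (hSpos : 0 < μ S) :
    IsAlmostQMeasure (fun B => μ (S ∩ B) / μ S) ∧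
      (IsPMeasure μ → IsQMeasure (fun B => μ (S ∩ B) / μ S)) := by
  obtain ⟨p, rfl⟩ := hA.exists_eq_fibers
  have happrox : ∀ f, FinToOne f → ∀ η > 0, ∃ E ⊆ S, E.InjOn f ∧ μ S - η ≤ μ E :=
    fun f hf η hη => exists_injOn_subset_measure_ge hμ hAfin
      (fun δ hδ c hc => (h1 δ hδ _ (isPartition_fibers c) hc).imp
        fun _ hT => ⟨isSelector_fibers_iff.mp hT.1, hT.2⟩)
      (fun T hT => h2 T (isSelector_fibers_iff.mpr hT)) (isSelector_fibers_iff.mp hS)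
      hf hη
  have hrestrict : ∀ E ⊆ S, (fun B => μ (S ∩ B) / μ S) E = μ E / μ S := fun E hE => by
    dsimp only
    rw [inter_eq_right.mpr hE]
  refine ⟨fun B hB hBfin δ hδ => ?_, fun hP B hB hBfin => ?_⟩
  · obtain ⟨f, rfl⟩ := hB.exists_eq_fibers
    obtain ⟨E, hES, hEinj, hEμ⟩ := happrox f hBfin (μ S * (1 - δ) / 2) (by nlinarith)
    refine ⟨E, isSelector_fibers_iff.mpr hEinj, ?_⟩
    rw [hrestrict E hES, lt_div_iff₀ hSpos]
    nlinarith
  · obtain ⟨f, rfl⟩ := hB.exists_eq_fibers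
    obtain ⟨E, hES, hEinj, hEμ⟩ :=
      hP.exists_injOn_subset_measure_eq hμ hfree hBfin (happrox f hBfin)
    refine ⟨E, isSelector_fibers_iff.mpr hEinj, ?_⟩
    rw [hrestrict E hES, hEμ, div_self hSpos.ne']

/-- Restricting a Q⁺-measure to a positive-measure selector of a critical partition
gives an almost Q-measure, and a Q-measure if the original measure is a P-measure. -/
theorem stmt_18 (μ : Set ℕ → ℝ) (hμ : IsMeasure μ) (hfree : IsFree μ) (ε : ℝ)
    (hε0 : 0 < ε) (hε1 : ε ≤ 1)
    (h1 : ∀ δ : ℝ, δ < ε → ∀ A : ℕ → Set ℕ, IsPartition A → (∀ n, (A n).Finite) →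
      ∃ T : Set ℕ, IsSelector T A ∧ δ ≤ μ T)
    (A : ℕ → Set ℕ) (hA : IsPartition A) (hAfin : ∀ n, (A n).Finite)
    (h2 : ∀ T : Set ℕ, IsSelector T A → μ T ≤ ε)
    (S : Set ℕ) (hS : IsSelector S A) (hSpos : 0 < μ S) :
    IsAlmostQMeasure (fun B => μ (S ∩ B) / μ S) ∧
      (IsPMeasure μ → IsQMeasure (fun B => μ (S ∩ B) / μ S)) :=
  stmt_18_general μ hμ hfree ε h1 A hA hAfin h2 S hS hSpos
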